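/- Let s ≥ 2 be an integer and let a₁,…,a_k be positive integers with s·a_i ≤ a_{i+1} for all 1 ≤ i < k. Then there exists κ > 0 such that for every positive integer N there is a set A ⊆ [N] with |A| ≥ κ·N^r containing no non-trivial solutions to the equation a₁x₁+⋯+a_kx_k = a₁x₁'+⋯+a_kx_k', where r = log s / (log s + log(a₁+a₂+⋯+a_k)). -/

import Mathlib

/-!
Put `b = s (a₁ + ⋯ + a_k)`, choose `n` with `bⁿ ≤ N < bⁿ⁺¹`, and let `A` consist of the numbers
`1 + ∑_{j<n} dⱼ bʲ` with digits `0 ≤ dⱼ < s`. Then `|A| = sⁿ ≥ N^r / s`, because `b^r = s`.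
For `xᵢ = 1 + ∑ⱼ dᵢⱼ bʲ` the sum `∑ aᵢ xᵢ` has base-`b` "columns" `∑ᵢ aᵢ dᵢⱼ ≤ (s - 1) ∑ aᵢ < b`,
so no carries occur and the columns can be read off the sum; within a column the digits
`dᵢⱼ < s` can be read off because the weights satisfy `s aᵢ ≤ aᵢ₊₁`. Both readings are the same
uniqueness statement for lacunary weights.
-/

open Finset

def IsLacunary {n : ℕ} (B : ℕ) (w : Fin n → ℕ) : Prop :=
  ∀ i : Fin n, ∀ h : i.val + 1 < n, B * w i ≤ w ⟨i.val + 1, h⟩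

theorem isLacunary_pow (b n : ℕ) : IsLacunary b fun j : Fin n => b ^ (j : ℕ) :=
  fun i _ => (pow_succ' b i).ge

namespace IsLacunary

variable {n B : ℕ}

theorem comp_castSucc {w : Fin (n + 1) → ℕ} (hw : IsLacunary B w) :
    IsLacunary B (w ∘ Fin.castSucc) :=
  fun i _ => hw i.castSucc (by rw [Fin.val_castSucc]; omega)

theorem sum_castSucc_mul_lt_last {w : Fin (n + 1) → ℕ} (hw : IsLacunary B w) (hw0 : 0 < w 0)
    (d : Fin n → ℕ) (hd : ∀ i, d i < B) :
    ∑ i, w i.castSucc * d i < w (Fin.last n) := by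
  induction n with
  | zero => simpa using hw0
  | succ n ih =>
    have hlow : ∑ i : Fin n, w i.castSucc.castSucc * d i.castSucc < w (Fin.last n).castSucc :=
      ih hw.comp_castSucc hw0 (d ∘ Fin.castSucc) fun i => hd _
    calc ∑ i, w i.castSucc * d i
        = ∑ i : Fin n, w i.castSucc.castSucc * d i.castSucc
            + w (Fin.last n).castSucc * d (Fin.last n) := Fin.sum_univ_castSucc _
      _ < w (Fin.last n).castSucc * (d (Fin.last n) + 1) := by rw [mul_add_one]; omega
      _ ≤ B * w (Fin.last n).castSucc := by rw [mul_comm]; exact Nat.mul_le_mul_right _ (hd _)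
      _ ≤ w (Fin.last (n + 1)) := hw _ (by simp)

theorem eq_of_sum_mul_eq {w : Fin n → ℕ} (hw : IsLacunary B w) (hw0 : ∀ i, 0 < w i)
    {d d' : Fin n → ℕ} (hd : ∀ i, d i < B) (hd' : ∀ i, d' i < B)
    (h : ∑ i, w i * d i = ∑ i, w i * d' i) : d = d' := by
  induction n with
  | zero => exact funext fun i => i.elim0
  | succ n ih =>
    rw [Fin.sum_univ_castSucc, Fin.sum_univ_castSucc] at h
    have hlt := hw.sum_castSucc_mul_lt_last (hw0 0) _ fun i => hd i.castSucc
    have hlt' := hw.sum_castSucc_mul_lt_last (hw0 0) _ fun i => hd' i.castSucc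
    have hlast : d (Fin.last n) = d' (Fin.last n) := by
      have := congrArg (· / w (Fin.last n)) h
      simpa [Nat.add_mul_div_left _ _ (hw0 _), Nat.div_eq_of_lt, hlt, hlt'] using this
    have hinit : d ∘ Fin.castSucc = d' ∘ Fin.castSucc :=
      ih hw.comp_castSucc (fun i => hw0 _) (fun i => hd _) (fun i => hd' _)
        (by rw [hlast] at h; simpa using h)
    exact funext fun i => Fin.lastCases hlast (congrFun hinit) i

end IsLacunary

def ofDigitsFin {n s : ℕ} (b : ℕ) (d : Fin n → Fin s) : ℕ := ∑ j : Fin n, b ^ (j : ℕ) * (d j : ℕ)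

section ofDigitsFin

variable {b s n : ℕ}

theorem ofDigitsFin_lt_pow (hsb : s ≤ b) (d : Fin n → Fin s) : ofDigitsFin b d < b ^ n := by
  simpa [ofDigitsFin] using (isLacunary_pow b (n + 1)).sum_castSucc_mul_lt_last one_pos
    (fun j => (d j : ℕ)) fun j => (d j).2.trans_le hsb

theorem ofDigitsFin_injective (hb : 0 < b) (hsb : s ≤ b) :
    Function.Injective (ofDigitsFin (n := n) (s := s) b) := fun d d' h =>
  funext fun j => Fin.ext <| congrFun ((isLacunary_pow b n).eq_of_sum_mul_eq
    (fun _ => pow_pos hb _) (fun j => (d j).2.trans_le hsb) (fun j => (d' j).2.trans_le hsb) h) j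

end ofDigitsFin

def NoNontrivialSolutions {k : ℕ} (a : Fin k → ℕ) (A : Finset ℤ) : Prop :=
  ∀ x x' : Fin k → ℤ, (∀ i, x i ∈ A) → (∀ i, x' i ∈ A) →
    ∑ i, (a i : ℤ) * x i = ∑ i, (a i : ℤ) * x' i → x = x'

section digitSet

variable {k b s n : ℕ} {a : Fin k → ℕ}

theorem sum_mul_ofDigitsFin (a : Fin k → ℕ) (e : Fin k → Fin n → Fin s) :
    ∑ i, a i * ofDigitsFin b (e i) = ∑ j : Fin n, b ^ (j : ℕ) * ∑ i, a i * (e i j : ℕ) := by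
  simp only [ofDigitsFin, mul_sum]
  rw [sum_comm]
  exact sum_congr rfl fun j _ => sum_congr rfl fun i _ => mul_left_comm _ _ _

theorem eq_of_sum_mul_ofDigitsFin_eq (ha : ∀ i, 0 < a i) (hgrow : IsLacunary s a)
    (hb : (s - 1) * ∑ i, a i < b) {d d' : Fin k → Fin n → Fin s}
    (h : ∑ i, a i * ofDigitsFin b (d i) = ∑ i, a i * ofDigitsFin b (d' i)) : d = d' := by
  have hcol_lt (e : Fin k → Fin n → Fin s) (j : Fin n) : ∑ i, a i * (e i j : ℕ) < b :=
    calc ∑ i, a i * (e i j : ℕ) ≤ ∑ i, a i * (s - 1) :=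
          sum_le_sum fun i _ => Nat.mul_le_mul_left _ (Nat.le_sub_one_of_lt (e i j).2)
      _ = (s - 1) * ∑ i, a i := by rw [← sum_mul, mul_comm]
      _ < b := hb
  have hcols := (isLacunary_pow b n).eq_of_sum_mul_eq (fun _ => pow_pos (Nat.zero_lt_of_lt hb) _)
    (hcol_lt d) (hcol_lt d') (by rwa [← sum_mul_ofDigitsFin, ← sum_mul_ofDigitsFin])
  funext i j
  exact Fin.ext <| congrFun (hgrow.eq_of_sum_mul_eq ha (fun i => (d i j).2)
    (fun i => (d' i j).2) (congrFun hcols j)) i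

def digitSet (b s n : ℕ) : Finset ℤ :=
  univ.image fun d : Fin n → Fin s => (ofDigitsFin b d : ℤ) + 1

theorem digitSet_subset_Icc (hsb : s ≤ b) : digitSet b s n ⊆ Icc 1 ((b ^ n : ℕ) : ℤ) := by
  simp only [digitSet, image_subset_iff, mem_univ, mem_Icc, true_implies]
  intro d
  have := ofDigitsFin_lt_pow hsb d
  omega

theorem card_digitSet (hb : 0 < b) (hsb : s ≤ b) : (digitSet b s n).card = s ^ n := by
  rw [digitSet, card_image_of_injective, card_univ, Fintype.card_fun, Fintype.card_fin,
    Fintype.card_fin]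
  intro d d' h
  exact ofDigitsFin_injective hb hsb (by simpa using h)

theorem noNontrivialSolutions_digitSet (ha : ∀ i, 0 < a i) (hgrow : IsLacunary s a)
    (hb : (s - 1) * ∑ i, a i < b) : NoNontrivialSolutions a (digitSet b s n) := by
  intro x x' hx hx' h
  simp only [digitSet, mem_image, mem_univ, true_and] at hx hx'
  choose d hd using hx
  choose d' hd' using hx'
  obtain rfl : x = fun i => (ofDigitsFin b (d i) : ℤ) + 1 := funext fun i => (hd i).symm
  obtain rfl : x' = fun i => (ofDigitsFin b (d' i) : ℤ) + 1 := funext fun i => (hd' i).symm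
  simp only [mul_add, sum_add_distrib, mul_one, add_left_inj] at h
  rw [eq_of_sum_mul_ofDigitsFin_eq (d := d) (d' := d') ha hgrow hb (by exact_mod_cast h)]

end digitSet

theorem Real.rpow_logb_le_pow {b s N : ℝ} {m : ℕ} (hb : 1 < b) (hs : 1 ≤ s) (hN0 : 0 ≤ N)
    (hN : N ≤ b ^ m) : N ^ Real.logb b s ≤ s ^ m :=
  calc N ^ Real.logb b s ≤ (b ^ m) ^ Real.logb b s :=
        Real.rpow_le_rpow hN0 hN (Real.logb_nonneg hb hs)
    _ = (b ^ Real.logb b s) ^ m := (Real.rpow_pow_comm (by positivity) _ _).symm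
    _ = s ^ m := by rw [Real.rpow_logb (by positivity) hb.ne' (by positivity)]

/-- Let `s ≥ 2` be an integer and `a₁,…,a_k` positive integers with
`s·aᵢ ≤ a_{i+1}` for `1 ≤ i < k`. Then there is `κ > 0` such that for every positive `N`
there is `A ⊆ [N]` with `|A| ≥ κ·N^r`, `r = log s/(log s + log(a₁+⋯+a_k))`, containing
no non-trivial solutions to `∑ aᵢxᵢ = ∑ aᵢxᵢ'`. -/
theorem statement9 (s k : ℕ) (hs : 2 ≤ s) (hk : 1 ≤ k)
    (a : Fin k → ℕ) (ha : ∀ i, 0 < a i)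
    (hgrow : ∀ i : Fin k, ∀ h : i.val + 1 < k, s * a i ≤ a ⟨i.val + 1, h⟩) :
    ∃ κ : ℝ, 0 < κ ∧ ∀ N : ℕ, 0 < N → ∃ A : Finset ℤ,
      A ⊆ Finset.Icc 1 (N : ℤ) ∧
      κ * (N : ℝ) ^ (Real.log s / (Real.log s + Real.log (∑ i, (a i : ℝ)))) ≤ A.card ∧
      ∀ x x' : Fin k → ℤ, (∀ i, x i ∈ A) → (∀ i, x' i ∈ A) →
        ∑ i, (a i : ℤ) * x i = ∑ i, (a i : ℤ) * x' i → x = x' := by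
  have hsum : 0 < ∑ i, a i :=
    (ha ⟨0, hk⟩).trans_le (single_le_sum (fun i _ => Nat.zero_le _) (mem_univ _))
  set b := s * ∑ i, a i with hb_def
  have hsb : s ≤ b := Nat.le_mul_of_pos_right s hsum
  have hb : (s - 1) * ∑ i, a i < b := Nat.mul_lt_mul_of_pos_right (by omega) hsum
  have hr : Real.log s / (Real.log s + Real.log (∑ i, (a i : ℝ))) = Real.logb b s := by
    have hsum' : (∑ i, (a i : ℝ)) ≠ 0 := by exact_mod_cast hsum.ne'
    rw [Real.logb, hb_def, Nat.cast_mul, Nat.cast_sum, Real.log_mul (by positivity) hsum']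
  refine ⟨1 / s, by positivity, fun N hN => ?_⟩
  set n := Nat.log b N
  refine ⟨digitSet b s n, (digitSet_subset_Icc hsb).trans (Icc_subset_Icc le_rfl ?_), ?_,
    noNontrivialSolutions_digitSet ha hgrow hb⟩
  · exact_mod_cast Nat.pow_log_le_self b hN.ne'
  · have hN_le : (N : ℝ) ≤ (b : ℝ) ^ (n + 1) := by
      exact_mod_cast (Nat.lt_pow_succ_log_self (by omega) N).le
    rw [hr, card_digitSet (by omega) hsb]
    calc 1 / (s : ℝ) * N ^ Real.logb b s ≤ 1 / s * s ^ (n + 1) := by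
          gcongr
          exact Real.rpow_logb_le_pow (by exact_mod_cast (by omega : 1 < b))
            (by exact_mod_cast (by omega : 1 ≤ s)) N.cast_nonneg hN_le
      _ = (s ^ n : ℕ) := by push_cast; field_simp; ring
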